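/- Let Λ be a free ℤ-module with symmetric bilinear form b. Suppose δ, δ' ∈ Λ both satisfy b(δ,δ) = b(δ',δ') = −2, both are primitive, and b(δ, α), b(δ', α) ∈ 2ℤ for all α ∈ Λ, and suppose Λ = ℤδ ⊕ δ^⊥ with b unimodular on δ^⊥. Then δ − δ' is divisible by 2 in Λ, and writing δ' = 2a + cδ with a ∈ δ^⊥, the integer c is odd. -/
import Mathlib


/-- Let `Λ` be a free ℤ-module with a (nondegenerate) symmetric bilinear form
`b`, and let `δ, δ'` be primitive classes with `b(δ,δ) = b(δ',δ') = −2` whose pairings with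
`Λ` are all even. Assume `Λ = ℤδ ⊕ δ^⊥` with `b` unimodular on `δ^⊥`. Then `δ − δ'` is
divisible by `2` in `Λ`, and `δ' = 2a + cδ` with `a ∈ δ^⊥` and `c` odd. -/
theorem stmt5 {Λ : Type*} [AddCommGroup Λ] [Module ℤ Λ]
    (b : Λ →ₗ[ℤ] Λ →ₗ[ℤ] ℤ) (hb : ∀ x y, b x y = b y x)
    (hnd : ∀ x : Λ, (∀ z, b x z = 0) → x = 0)
    (δ δ' : Λ)
    (hδδ : b δ δ = -2) (hδ'δ' : b δ' δ' = -2)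
    (hδprim : ∀ (m : ℤ) (y : Λ), δ = m • y → IsUnit m)
    (hδ'prim : ∀ (m : ℤ) (y : Λ), δ' = m • y → IsUnit m)
    (hδeven : ∀ α, Even (b δ α)) (hδ'even : ∀ α, Even (b δ' α))
    (hdecomp : ∀ x : Λ, ∃ (c : ℤ) (y : Λ), b y δ = 0 ∧ x = c • δ + y)
    (hunimod : ∀ f : Λ →ₗ[ℤ] ℤ, ∃ w : Λ, b w δ = 0 ∧
        ∀ y : Λ, b y δ = 0 → f y = b w y) :
    (∃ γ : Λ, δ - δ' = 2 • γ) ∧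
      ∃ (a : Λ) (c : ℤ), b a δ = 0 ∧ Odd c ∧ δ' = 2 • a + c • δ := by
  -- bilinearity for the zsmul appearing in the statement
  have hsm2 : ∀ (x v : Λ) (n : ℤ), b x (n • v) = n * b x v := by
    intro x v n
    rw [← Int.cast_smul_eq_zsmul ℤ n v, LinearMap.map_smul, smul_eq_mul, Int.cast_id]
  have hsm1 : ∀ (v x : Λ) (n : ℤ), b (n • v) x = n * b v x := by
    intro v x n
    rw [hb, hsm2, hb]
  obtain ⟨c, y, hyδ, hy⟩ := hdecomp δ'
  -- y pairs evenly with everything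
  have hdvd : ∀ z, (2:ℤ) ∣ b y z := by
    intro z
    have h1 : b δ' z = c * b δ z + b y z := by
      rw [hy, map_add, LinearMap.add_apply, hsm1]
    obtain ⟨k, hk⟩ := hδ'even z
    obtain ⟨l, hl⟩ := hδeven z
    rw [hk, hl] at h1
    exact ⟨k - c * l, by linear_combination -h1⟩
  -- the half-pairing linear functional
  set f : Λ →ₗ[ℤ] ℤ :=
    { toFun := fun z => b y z / 2
      map_add' := by
        intro z1 z2
        obtain ⟨k1, hk1⟩ := hdvd z1
        obtain ⟨k2, hk2⟩ := hdvd z2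
        simp only [map_add, hk1, hk2]
        omega
      map_smul' := by
        intro m z
        obtain ⟨k, hk⟩ := hdvd z
        simp only [map_smul, hk, smul_eq_mul, RingHom.id_apply]
        rw [← mul_assoc, mul_comm m 2, mul_assoc,
          Int.mul_ediv_cancel_left _ two_ne_zero,
          Int.mul_ediv_cancel_left _ two_ne_zero] } with hf
  obtain ⟨w, hwδ, hw⟩ := hunimod f
  have hyz : ∀ z, b z δ = 0 → b y z = 2 * b w z := by
    intro z hz
    have h2 := hw z hz
    obtain ⟨k, hk⟩ := hdvd z
    simp only [hf, LinearMap.coe_mk, AddHom.coe_mk, hk] at h2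
    omega
  -- y = w + w
  have hyww : y = w + w := by
    have h0 : y - (w + w) = 0 := by
      apply hnd
      intro x
      obtain ⟨c', z, hzδ, hx⟩ := hdecomp x
      rw [hx]
      simp only [map_sub, map_add, LinearMap.sub_apply, LinearMap.add_apply, hsm2,
        hyδ, hwδ, hyz z hzδ]
      ring
    have := sub_eq_zero.mp h0
    exact this
  have hδw : b δ w = 0 := by rw [hb]; exact hwδ
  rw [hyww] at hy
  -- pairing of δ' against anything
  have hδ'x : ∀ x, b δ' x = c * b δ x + (b w x + b w x) := by
    intro x
    rw [hy, map_add, map_add, LinearMap.add_apply, LinearMap.add_apply, hsm1]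
  have hδ'δ : b δ' δ = c * (-2) := by rw [hδ'x, hδδ, hwδ]; ring
  have hδ'w : b δ' w = b w w + b w w := by rw [hδ'x, hδw]; ring
  have heq : b δ' δ' = c * (c * (-2)) + ((b w w + b w w) + (b w w + b w w)) := by
    rw [hδ'x δ', hb δ δ', hδ'δ, hb w δ', hδ'w]
  rw [hδ'δ'] at heq
  have hcc2 : (2:ℤ) * (c * c) = 2 * (2 * b w w + 1) := by linear_combination heq
  have hcc : c * c = 2 * b w w + 1 :=
    mul_left_cancel₀ (by norm_num : (2:ℤ) ≠ 0) hcc2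
  have hodd : Odd c := by
    have hoc : Odd (c * c) := ⟨b w w, by rw [hcc]⟩
    exact (Int.odd_mul.mp hoc).1
  refine ⟨?_, w, c, hwδ, hodd, ?_⟩
  · obtain ⟨k, hk⟩ := hodd
    refine ⟨-(k • δ) - w, ?_⟩
    rw [hy, hk, two_nsmul]
    have hsplit : (2 * k + 1) • δ = k • δ + k • δ + δ := by
      rw [show (2 * k + 1 : ℤ) = k + k + 1 by ring, add_zsmul, add_zsmul, one_zsmul]
    rw [hsplit]
    abel
  · rw [hy, two_nsmul, add_comm]
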